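/- arXiv:2411.13003 — 5 statements merged into one kernel-verified Lean document; each statement's English description precedes it below -/
import Mathlib

section
/- For all integers n ≥ 0 and s ≥ 2, the coefficient of t^(31+15n+2n²) in the formal power series Δ(t) ∈ ℤ[[t]] equals −2. -/
open PowerSeries

/-- The inverse of a power series whose constant coefficient is `1`. -/
noncomputable def inv1 (f : PowerSeries ℤ) : PowerSeries ℤ := f.invOfUnit 1

private lemma inv1_spec (k : ℕ) (hk : k ≠ 0) :
    ((1 : PowerSeries ℤ) - X ^ k) * inv1 (1 - X ^ k) = 1 :=
  PowerSeries.mul_invOfUnit _ 1 (by simp [zero_pow hk])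

set_option maxHeartbeats 1000000 in
theorem stmt0 (n s : ℕ) (hs : 2 ≤ s) :
    PowerSeries.coeff (31 + 15 * n + 2 * n ^ 2)
      ((1 - (PowerSeries.X : PowerSeries ℤ)) *
          ((1 - PowerSeries.X ^ ((2 + n) * (9 + 2 * n))) *
              (1 - (1 - PowerSeries.X ^ (3 * s)) *
                  (PowerSeries.X ^ ((4 + n) * (7 + 2 * n)) +
                    PowerSeries.X ^ (2 * (4 + n) * (7 + 2 * n) + 3 * s)) -
                PowerSeries.X ^ ((9 + 2 * n) * (7 + 2 * n) + 6 * s)) -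
            (1 - (1 - PowerSeries.X ^ (3 * s)) *
                (PowerSeries.X ^ ((3 + n) * (9 + 2 * n)) +
                  PowerSeries.X ^ (2 * (3 + n) * (9 + 2 * n) + 3 * s)) -
              PowerSeries.X ^ ((9 + 2 * n) * (7 + 2 * n) + 6 * s)) *
            (1 - PowerSeries.X ^ ((3 + n) * (7 + 2 * n)))) *
        inv1 (1 - PowerSeries.X ^ (9 + 2 * n)) *
        inv1 (1 - PowerSeries.X ^ (7 + 2 * n)) *
        inv1 (1 - PowerSeries.X ^ 3)) = -2 := by
  obtain ⟨t, rfl⟩ : ∃ t, s = 2 + t := ⟨s - 2, by omega⟩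
  have h1 : ((1 : PowerSeries ℤ) - X ^ (9 + 2 * n)) * inv1 (1 - X ^ (9 + 2 * n)) = 1 :=
    inv1_spec _ (by omega)
  have h2 : ((1 : PowerSeries ℤ) - X ^ (7 + 2 * n)) * inv1 (1 - X ^ (7 + 2 * n)) = 1 :=
    inv1_spec _ (by omega)
  have h3 : ((1 : PowerSeries ℤ) - X ^ 3) * inv1 (1 - X ^ 3) = 1 :=
    inv1_spec _ (by omega)
  set u1 := inv1 ((1 : PowerSeries ℤ) - X ^ (9 + 2 * n)) with hu1
  set u2 := inv1 ((1 : PowerSeries ℤ) - X ^ (7 + 2 * n)) with hu2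
  set u3 := inv1 ((1 : PowerSeries ℤ) - X ^ 3) with hu3
  -- auxiliary polynomials
  set Q1 : PowerSeries ℤ := 1 - 2 * X + X ^ 2 + X ^ 3 - 2 * X ^ 4 with hQ1
  set Q2 : PowerSeries ℤ :=
    1 - X + X ^ (7 + 2 * n) - X ^ (8 + 2 * n) + X ^ (9 + 2 * n) - X ^ (10 + 2 * n) with hQ2
  set R1 : PowerSeries ℤ := 1 + X - 2 * X ^ 2 +
    (1 - 2 * X + X ^ 2 + X ^ 3 - 2 * X ^ 4) *
      (X ^ (2 + 2 * n) + X ^ (4 + 2 * n) - X ^ (5 + 2 * n) - X ^ (7 + 2 * n)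
        - X ^ (11 + 4 * n) + X ^ (14 + 4 * n)) with hR1
  set R2 : PowerSeries ℤ := (1 - X) *
    (X ^ (2 * n) + X ^ (2 + 2 * n) + X ^ (4 + 2 * n) - X ^ (9 + 4 * n) - X ^ (11 + 4 * n)) with hR2
  set H : PowerSeries ℤ :=
      X ^ (3 * t + 2) - X ^ (30 + 15 * n + 2 * n ^ 2 + 3 * t)
    + X ^ (36 + 15 * n + 2 * n ^ 2 + 6 * t)
    + X ^ (14 + 13 * n + 2 * n ^ 2) - X ^ (20 + 13 * n + 2 * n ^ 2 + 3 * t)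
    + X ^ (48 + 28 * n + 4 * n ^ 2 + 3 * t) - X ^ (54 + 28 * n + 4 * n ^ 2 + 6 * t)
    + X ^ (61 + 30 * n + 4 * n ^ 2 + 6 * t)
    - X ^ (3 * t + 1) + X ^ (28 + 15 * n + 2 * n ^ 2 + 3 * t)
    - X ^ (34 + 15 * n + 2 * n ^ 2 + 6 * t)
    - X ^ (16 + 13 * n + 2 * n ^ 2) + X ^ (22 + 13 * n + 2 * n ^ 2 + 3 * t)
    - X ^ (49 + 28 * n + 4 * n ^ 2 + 3 * t) + X ^ (55 + 28 * n + 4 * n ^ 2 + 6 * t)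
    - X ^ (64 + 30 * n + 4 * n ^ 2 + 6 * t) with hH
  have key :
      (1 - (PowerSeries.X : PowerSeries ℤ)) *
          ((1 - PowerSeries.X ^ ((2 + n) * (9 + 2 * n))) *
              (1 - (1 - PowerSeries.X ^ (3 * (2 + t))) *
                  (PowerSeries.X ^ ((4 + n) * (7 + 2 * n)) +
                    PowerSeries.X ^ (2 * (4 + n) * (7 + 2 * n) + 3 * (2 + t))) -
                PowerSeries.X ^ ((9 + 2 * n) * (7 + 2 * n) + 6 * (2 + t))) -
            (1 - (1 - PowerSeries.X ^ (3 * (2 + t))) *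
                (PowerSeries.X ^ ((3 + n) * (9 + 2 * n)) +
                  PowerSeries.X ^ (2 * (3 + n) * (9 + 2 * n) + 3 * (2 + t))) -
              PowerSeries.X ^ ((9 + 2 * n) * (7 + 2 * n) + 6 * (2 + t))) *
            (1 - PowerSeries.X ^ ((3 + n) * (7 + 2 * n)))) *
        u1 * u2 * u3
      = (X ^ (29 + 15 * n + 2 * n ^ 2) + X ^ (30 + 15 * n + 2 * n ^ 2)
          + X ^ (19 + 13 * n + 2 * n ^ 2) + X ^ (26 + 15 * n + 2 * n ^ 2)
          - X ^ (28 + 15 * n + 2 * n ^ 2)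
          - X ^ (31 + 15 * n + 2 * n ^ 2) - X ^ (31 + 15 * n + 2 * n ^ 2)
          - X ^ (18 + 13 * n + 2 * n ^ 2) - X ^ (25 + 15 * n + 2 * n ^ 2))
        + X ^ (32 + 15 * n + 2 * n ^ 2) *
            (R1 * (u1 * (u2 * u3)) - R2 * (u1 * u2) + (1 - X) * H * (u1 * (u2 * u3))) := by
    calc
      _ = (X ^ ((3 + n) * (9 + 2 * n)) * Q1) *
            ((((1 : PowerSeries ℤ) - X ^ (9 + 2 * n)) * u1) *
              ((((1 : PowerSeries ℤ) - X ^ (7 + 2 * n)) * u2) *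
                ((((1 : PowerSeries ℤ) - X ^ 3) * u3))))
          + X ^ (32 + 15 * n + 2 * n ^ 2) * (R1 * (u1 * (u2 * u3)))
          - (X ^ ((2 + n) * (9 + 2 * n)) * Q2) *
            ((((1 : PowerSeries ℤ) - X ^ (9 + 2 * n)) * u1) *
              ((((1 : PowerSeries ℤ) - X ^ (7 + 2 * n)) * u2) *
                ((((1 : PowerSeries ℤ) - X ^ 3) * u3))))
          - X ^ (32 + 15 * n + 2 * n ^ 2) *
              ((R2 * (u1 * u2)) * (((1 : PowerSeries ℤ) - X ^ 3) * u3))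
          + X ^ (32 + 15 * n + 2 * n ^ 2) * ((1 - X) * H * (u1 * (u2 * u3))) := by
            rw [hQ1, hQ2, hR1, hR2, hH]; ring
      _ = (X ^ ((3 + n) * (9 + 2 * n)) * Q1) * (1 * (1 * 1))
          + X ^ (32 + 15 * n + 2 * n ^ 2) * (R1 * (u1 * (u2 * u3)))
          - (X ^ ((2 + n) * (9 + 2 * n)) * Q2) * (1 * (1 * 1))
          - X ^ (32 + 15 * n + 2 * n ^ 2) * ((R2 * (u1 * u2)) * 1)
          + X ^ (32 + 15 * n + 2 * n ^ 2) * ((1 - X) * H * (u1 * (u2 * u3))) := by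
            rw [h1, h2, h3]
      _ = _ := by rw [hQ1, hQ2]; ring
  rw [key]
  generalize n ^ 2 = K at *
  have c1 : ¬(31 + 15 * n + 2 * K = 29 + 15 * n + 2 * K) := by omega
  have c2 : ¬(31 + 15 * n + 2 * K = 30 + 15 * n + 2 * K) := by omega
  have c3 : ¬(31 + 15 * n + 2 * K = 19 + 13 * n + 2 * K) := by omega
  have c4 : ¬(31 + 15 * n + 2 * K = 26 + 15 * n + 2 * K) := by omega
  have c5 : ¬(31 + 15 * n + 2 * K = 28 + 15 * n + 2 * K) := by omega
  have c6 : ¬(31 + 15 * n + 2 * K = 18 + 13 * n + 2 * K) := by omega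
  have c7 : ¬(31 + 15 * n + 2 * K = 25 + 15 * n + 2 * K) := by omega
  have c8 : ¬(32 + 15 * n + 2 * K ≤ 31 + 15 * n + 2 * K) := by omega
  have c9 : ¬(31 + 15 * n = 19 + 13 * n) := by omega
  have c10 : ¬(31 + 15 * n = 18 + 13 * n) := by omega
  simp [PowerSeries.coeff_X_pow, PowerSeries.coeff_X_pow_mul', c1, c2, c3, c4, c5, c6, c7, c8, c9, c10]
end

section
/- For every i ∈ {0, 1, …, r−1} and every n ∈ {0, 1, …, r−1}, if Q_i = [n·q⁻¹], then Q_i·q = k̄_i·p + n. -/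
open Finset

noncomputable section

namespace TTK

/-- `res p x` is the residue `[x]` of `x` modulo `p`. -/
def res (p : ℕ) (x : ℤ) : ℤ := x % (p : ℤ)

/-- The set `Q = {[n·q⁻¹] : n = 0, …, r−1}`. -/
def Qset (p r : ℕ) (qinv : ℤ) : Finset ℤ :=
  (Finset.range r).image fun n : ℕ => res p ((n : ℤ) * qinv)

/-- The set `R = {[−n·q⁻¹] : n = 1, …, q}`. -/
def Rset (p q : ℕ) (qinv : ℤ) : Finset ℤ :=
  (Finset.Icc 1 q).image fun n : ℕ => res p (-(n : ℤ) * qinv)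

/-- `Qi i` is `Q_i`, the `i`-th smallest element of `Q`. -/
def Qi (p r : ℕ) (qinv : ℤ) (i : ℕ) : ℤ :=
  ((Qset p r qinv).sort (· ≤ ·)).getD i 0

/-- `Q' = [r·q⁻¹]`. -/
def Qp' (p r : ℕ) (qinv : ℤ) : ℤ := res p ((r : ℤ) * qinv)

/-- `m` is the unique index with `Q_m < Q'` and (`m = r−1` or `Q' < Q_{m+1}`),
i.e. the number of elements of `Q` below `Q'`, minus one. -/
def mIdx (p r : ℕ) (qinv : ℤ) : ℕ :=
  ((Qset p r qinv).filter fun x => x < Qp' p r qinv).card - 1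

/-- `k_i = #{l ∈ R : Q_{i−1} ≤ l < Q_i}` for `1 ≤ i ≤ r−1`, and
`k_r = #{l ∈ R : Q_{r−1} ≤ l}`. -/
def ki (p q r : ℕ) (qinv : ℤ) (i : ℕ) : ℕ :=
  if i = r then ((Rset p q qinv).filter fun l => Qi p r qinv (r - 1) ≤ l).card
  else ((Rset p q qinv).filter fun l => Qi p r qinv (i - 1) ≤ l ∧ l < Qi p r qinv i).card

/-- `k̄_i = k_1 + ⋯ + k_i` (with `k̄_0 = 0`). -/
def kbar (p q r : ℕ) (qinv : ℤ) (i : ℕ) : ℕ := ∑ j ∈ Finset.Icc 1 i, ki p q r qinv j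

/-- `k' = #{l ∈ R : Q_m ≤ l < Q'}`. -/
def k' (p q r : ℕ) (qinv : ℤ) : ℕ :=
  ((Rset p q qinv).filter fun l =>
      Qi p r qinv (mIdx p r qinv) ≤ l ∧ l < Qp' p r qinv).card

/-- `k̄' = k̄_m + k'`. -/
def kbar' (p q r : ℕ) (qinv : ℤ) : ℕ :=
  kbar p q r qinv (mIdx p r qinv) + k' p q r qinv

/-- `d_i = Q_i − Q_{i−1}` for `1 ≤ i ≤ r−1`, and `d_r = p − Q_{r−1}`. -/
def di (p r : ℕ) (qinv : ℤ) (i : ℕ) : ℤ :=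
  if i = r then (p : ℤ) - Qi p r qinv (r - 1)
  else Qi p r qinv i - Qi p r qinv (i - 1)

end TTK

open TTK

namespace TTKaux
open TTK

variable {p q r : ℕ} {qinv : ℤ}

lemma hq1' (hp1 : 1 < p) (hqinv : ((q : ℤ) * qinv) % (p : ℤ) = 1) :
    ((q : ℤ) * qinv) ≡ 1 [ZMOD (p : ℤ)] := by
  have h1 : (1 : ℤ) % p = 1 := Int.emod_eq_of_lt (by norm_num) (by exact_mod_cast hp1)
  show ((q : ℤ) * qinv) % p = 1 % p
  rw [hqinv, h1]

lemma res_mul_q (hp1 : 1 < p) (hqinv : ((q : ℤ) * qinv) % (p : ℤ) = 1) (y : ℤ) :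
    (res p (y * qinv) * q) % p = y % p := by
  have h1 : res p (y * qinv) * q ≡ (y * qinv) * q [ZMOD (p : ℤ)] :=
    Int.ModEq.mul_right _ (Int.emod_emod_of_dvd _ dvd_rfl)
  have h2 : y * ((q : ℤ) * qinv) ≡ y * 1 [ZMOD (p : ℤ)] :=
    Int.ModEq.mul_left _ (hq1' hp1 hqinv)
  have h3 : res p (y * qinv) * q ≡ y [ZMOD (p : ℤ)] := by
    refine h1.trans ?_
    rw [show (y * qinv) * q = y * ((q : ℤ) * qinv) by ring]
    simpa using h2
  exact h3

lemma cancel_q (hp1 : 1 < p) (hqinv : ((q : ℤ) * qinv) % (p : ℤ) = 1) {a b : ℤ}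
    (h : (a * q) % p = (b * q) % p) : a % p = b % p := by
  have hq1 := hq1' hp1 hqinv
  have h' : a * q * qinv ≡ b * q * qinv [ZMOD (p : ℤ)] := Int.ModEq.mul_right _ h
  have h2 : a * ((q : ℤ) * qinv) ≡ b * ((q : ℤ) * qinv) [ZMOD (p : ℤ)] := by
    rw [show a * ((q:ℤ) * qinv) = a * q * qinv by ring,
        show b * ((q:ℤ) * qinv) = b * q * qinv by ring]
    exact h'
  have := ((Int.ModEq.mul_left a hq1).symm.trans h2).trans (Int.ModEq.mul_left b hq1)
  simpa [Int.ModEq] using this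

lemma cancel_qinv (hp1 : 1 < p) (hqinv : ((q : ℤ) * qinv) % (p : ℤ) = 1) {a b : ℤ}
    (h : (a * qinv) % p = (b * qinv) % p) : a % p = b % p := by
  have hq1 := hq1' hp1 hqinv
  have h' : a * qinv * q ≡ b * qinv * q [ZMOD (p : ℤ)] := Int.ModEq.mul_right _ h
  have h2 : a * ((q : ℤ) * qinv) ≡ b * ((q : ℤ) * qinv) [ZMOD (p : ℤ)] := by
    rw [show a * ((q:ℤ) * qinv) = a * qinv * q by ring,
        show b * ((q:ℤ) * qinv) = b * qinv * q by ring]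
    exact h'
  have := ((Int.ModEq.mul_left a hq1).symm.trans h2).trans (Int.ModEq.mul_left b hq1)
  simpa [Int.ModEq] using this

lemma Qset_mem_bounds (hp0 : 0 < p) {x : ℤ} (hx : x ∈ Qset p r qinv) : 0 ≤ x ∧ x < p := by
  obtain ⟨n, -, rfl⟩ := Finset.mem_image.1 hx
  exact ⟨Int.emod_nonneg _ (by exact_mod_cast hp0.ne'),
    Int.emod_lt_of_pos _ (by exact_mod_cast hp0)⟩

lemma Rset_mem_bounds (hp0 : 0 < p) {x : ℤ} (hx : x ∈ Rset p q qinv) : 0 ≤ x ∧ x < p := by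
  obtain ⟨n, -, rfl⟩ := Finset.mem_image.1 hx
  exact ⟨Int.emod_nonneg _ (by exact_mod_cast hp0.ne'),
    Int.emod_lt_of_pos _ (by exact_mod_cast hp0)⟩

lemma Qset_card (hp1 : 1 < p) (hrp : r ≤ p)
    (hqinv : ((q : ℤ) * qinv) % (p : ℤ) = 1) : (Qset p r qinv).card = r := by
  rw [Qset, Finset.card_image_of_injOn, Finset.card_range]
  intro a ha b hb hab
  simp only [Finset.coe_range, Set.mem_Iio] at ha hb
  have h := cancel_qinv hp1 hqinv (a := (a : ℤ)) (b := (b : ℤ)) hab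
  have ha' : ((a : ℤ)) % p = a :=
    Int.emod_eq_of_lt (by positivity) (by exact_mod_cast lt_of_lt_of_le ha hrp)
  have hb' : ((b : ℤ)) % p = b :=
    Int.emod_eq_of_lt (by positivity) (by exact_mod_cast lt_of_lt_of_le hb hrp)
  rw [ha', hb'] at h
  exact_mod_cast h

lemma sort_length (hp1 : 1 < p) (hrp : r ≤ p)
    (hqinv : ((q : ℤ) * qinv) % (p : ℤ) = 1) :
    ((Qset p r qinv).sort (· ≤ ·)).length = r := by
  rw [Finset.length_sort, Qset_card hp1 hrp hqinv]

lemma Qi_eq (hp1 : 1 < p) (hrp : r ≤ p)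
    (hqinv : ((q : ℤ) * qinv) % (p : ℤ) = 1) {i : ℕ} (hi : i < r) :
    Qi p r qinv i = ((Qset p r qinv).sort (· ≤ ·))[i]'(by
      rw [sort_length hp1 hrp hqinv]; exact hi) := by
  rw [Qi, List.getD_eq_getElem?_getD,
    List.getElem?_eq_getElem (by rw [sort_length hp1 hrp hqinv]; exact hi), Option.getD_some]

lemma Qi_mem (hp1 : 1 < p) (hrp : r ≤ p)
    (hqinv : ((q : ℤ) * qinv) % (p : ℤ) = 1) {i : ℕ} (hi : i < r) :
    Qi p r qinv i ∈ Qset p r qinv := by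
  rw [Qi_eq hp1 hrp hqinv hi]
  exact (Finset.mem_sort _).1 (List.getElem_mem _)

lemma Qi_lt (hp1 : 1 < p) (hrp : r ≤ p)
    (hqinv : ((q : ℤ) * qinv) % (p : ℤ) = 1) {i j : ℕ} (hij : i < j) (hj : j < r) :
    Qi p r qinv i < Qi p r qinv j := by
  have hi : i < r := lt_trans hij hj
  rw [Qi_eq hp1 hrp hqinv hi, Qi_eq hp1 hrp hqinv hj]
  have := ((Qset p r qinv).sortedLT_sort).strictMono_get
    (show (⟨i, by rw [sort_length hp1 hrp hqinv]; exact hi⟩ : Fin ((Qset p r qinv).sort (· ≤ ·)).length)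
      < ⟨j, by rw [sort_length hp1 hrp hqinv]; exact hj⟩ from hij)
  simpa using this

lemma Qi_zero (hp1 : 1 < p) (hr0 : 0 < r) (hrp : r ≤ p)
    (hqinv : ((q : ℤ) * qinv) % (p : ℤ) = 1) : Qi p r qinv 0 = 0 := by
  have h0 : (0 : ℤ) ∈ Qset p r qinv := by
    refine Finset.mem_image.2 ⟨0, Finset.mem_range.2 hr0, ?_⟩
    simp [res]
  have hlen : 0 < ((Qset p r qinv).sort (· ≤ ·)).length := by
    rw [sort_length hp1 hrp hqinv]; exact hr0
  have hget : ((Qset p r qinv).sort (· ≤ ·))[0] = (Qset p r qinv).min' ⟨0, h0⟩ :=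
    Finset.sorted_zero_eq_min' (s := Qset p r qinv) (h := hlen)
  rw [Qi_eq hp1 hrp hqinv hr0, hget]
  exact le_antisymm (Finset.min'_le _ _ h0)
    ((Qset_mem_bounds (by omega) (Finset.min'_mem _ _)).1)

lemma mem_Rset_iff (hp1 : 1 < p) (hqp : q < p)
    (hqinv : ((q : ℤ) * qinv) % (p : ℤ) = 1) {x : ℤ} (hx0 : 0 ≤ x) (hxp : x < p) :
    x ∈ Rset p q qinv ↔ (p : ℤ) - q ≤ (x * q) % p := by
  have hp0 : 0 < p := by omega
  constructor
  · intro hx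
    obtain ⟨n, hn, rfl⟩ := Finset.mem_image.1 hx
    simp only [Finset.mem_Icc] at hn
    have key : (res p (-(n : ℤ) * qinv) * q) % p = (-(n : ℤ)) % p := res_mul_q hp1 hqinv _
    have h2 : (-(n : ℤ)) % p = (p : ℤ) - n := by
      have he : ((p : ℤ) - n) % p = (-(n : ℤ)) % p := by
        rw [show (p : ℤ) - n = -(n : ℤ) + (p : ℤ) * 1 by ring, Int.add_mul_emod_self_left]
      rw [← he]
      refine Int.emod_eq_of_lt ?_ ?_
      · have h1 : (n : ℤ) ≤ q := by exact_mod_cast hn.2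
        have h2 : (q : ℤ) < p := by exact_mod_cast hqp
        omega
      · have h1 : (1 : ℤ) ≤ n := by exact_mod_cast hn.1
        omega
    rw [key, h2]
    have : (n : ℤ) ≤ q := by exact_mod_cast hn.2
    omega
  · intro hm
    set m := (x * q) % p with hmdef
    have hm0 : 0 ≤ m := Int.emod_nonneg _ (by exact_mod_cast hp0.ne')
    have hmp : m < p := Int.emod_lt_of_pos _ (by exact_mod_cast hp0)
    set n : ℕ := ((p : ℤ) - m).toNat with hndef
    have hn : ((n : ℤ)) = (p : ℤ) - m := Int.toNat_of_nonneg (by omega)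
    refine Finset.mem_image.2 ⟨n, Finset.mem_Icc.2 ⟨?_, ?_⟩, ?_⟩
    · have : (1 : ℤ) ≤ n := by rw [hn]; omega
      exact_mod_cast this
    · have : (n : ℤ) ≤ q := by rw [hn]; omega
      exact_mod_cast this
    · have key : (res p (-(n : ℤ) * qinv) * q) % p = (-(n : ℤ)) % p := res_mul_q hp1 hqinv _
      have h3 : (-(n : ℤ)) % p = m % p := by
        rw [hn, show -((p : ℤ) - m) = m + (p : ℤ) * (-1) by ring, Int.add_mul_emod_self_left]
      have h4 : (res p (-(n : ℤ) * qinv) * q) % p = (x * q) % p := by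
        rw [key, h3, Int.emod_eq_of_lt hm0 hmp]
      have h5 := cancel_q hp1 hqinv h4
      have hb := Rset_mem_bounds (q := q) (qinv := qinv) hp0
        (Finset.mem_image.2 ⟨n, Finset.mem_Icc.2 ⟨by
            have : (1 : ℤ) ≤ n := by rw [hn]; omega
            exact_mod_cast this, by
            have : (n : ℤ) ≤ q := by rw [hn]; omega
            exact_mod_cast this⟩, rfl⟩)
      rwa [Int.emod_eq_of_lt hb.1 hb.2, Int.emod_eq_of_lt hx0 hxp] at h5

lemma count_lt (hp1 : 1 < p) (hqp : q < p)
    (hqinv : ((q : ℤ) * qinv) % (p : ℤ) = 1) :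
    ∀ x : ℕ, x ≤ p →
      ((Rset p q qinv).filter fun l => l < (x : ℤ)).card = x * q / p := by
  have hp0 : 0 < p := by omega
  intro x
  induction x with
  | zero =>
    intro _
    rw [Finset.filter_false_of_mem (fun l hl => by
      simpa using not_lt.2 (Rset_mem_bounds hp0 hl).1), Finset.card_empty]
    simp
  | succ x ih =>
    intro hxp
    have hx : x ≤ p := Nat.le_of_succ_le hxp
    have hxlt : x < p := hxp
    have hsplit : ((Rset p q qinv).filter fun l => l < ((x + 1 : ℕ) : ℤ)) =
        ((Rset p q qinv).filter fun l => l < (x : ℤ)) ∪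
          ((Rset p q qinv).filter fun l => l = (x : ℤ)) := by
      rw [← Finset.filter_or]
      apply Finset.filter_congr
      intro l _
      push_cast
      constructor <;> intro h <;> omega
    have hdisj : Disjoint ((Rset p q qinv).filter fun l => l < (x : ℤ))
        ((Rset p q qinv).filter fun l => l = (x : ℤ)) := by
      rw [Finset.disjoint_left]
      intro l h1 h2
      simp only [Finset.mem_filter] at h1 h2
      omega
    rw [hsplit, Finset.card_union_of_disjoint hdisj, ih hx]
    have harith : (x + 1) * q / p = x * q / p + if p ≤ x * q % p + q then 1 else 0 := by
      rw [add_mul, one_mul, Nat.add_div hp0, Nat.div_eq_of_lt hqp, Nat.mod_eq_of_lt hqp,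
        add_zero]
    rw [harith]
    congr 1
    have hmemiff : ((x : ℤ) ∈ Rset p q qinv) ↔ p ≤ x * q % p + q := by
      rw [mem_Rset_iff hp1 hqp hqinv (by positivity) (by exact_mod_cast hxlt)]
      have hw : ((x : ℤ) * q) % p = ((x * q % p : ℕ) : ℤ) := by
        push_cast
        rfl
      rw [hw]
      constructor <;> intro h
      · omega
      · omega
    rw [Finset.filter_eq']
    by_cases hmem : (x : ℤ) ∈ Rset p q qinv
    · rw [if_pos hmem, if_pos (hmemiff.1 hmem)]
      simp
    · rw [if_neg hmem, if_neg fun h => hmem (hmemiff.2 h)]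
      simp

lemma kbar_eq_count (hp1 : 1 < p) (hqp : q < p) (hr0 : 0 < r) (hrp : r ≤ p)
    (hqinv : ((q : ℤ) * qinv) % (p : ℤ) = 1) :
    ∀ i < r, (kbar p q r qinv i) =
      ((Rset p q qinv).filter fun l => l < Qi p r qinv i).card := by
  have hp0 : 0 < p := by omega
  intro i
  induction i with
  | zero =>
    intro _
    rw [Qi_zero hp1 hr0 hrp hqinv]
    rw [Finset.filter_false_of_mem (fun l hl => by
      simpa using not_lt.2 (Rset_mem_bounds hp0 hl).1)]
    simp [kbar]
  | succ i ih =>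
    intro h
    have hi : i < r := lt_trans (Nat.lt_succ_self i) h
    have hlt : Qi p r qinv i < Qi p r qinv (i + 1) :=
      Qi_lt hp1 hrp hqinv (Nat.lt_succ_self i) h
    have hk : kbar p q r qinv (i + 1) = kbar p q r qinv i + ki p q r qinv (i + 1) := by
      rw [kbar, kbar, Finset.sum_Icc_succ_top (by omega)]
    have hne : i + 1 ≠ r := by omega
    rw [hk, ih hi, ki, if_neg hne, Nat.add_sub_cancel]
    have hsplit : ((Rset p q qinv).filter fun l => l < Qi p r qinv (i + 1)) =
        ((Rset p q qinv).filter fun l => l < Qi p r qinv i) ∪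
          ((Rset p q qinv).filter fun l =>
            Qi p r qinv i ≤ l ∧ l < Qi p r qinv (i + 1)) := by
      rw [← Finset.filter_or]
      apply Finset.filter_congr
      intro l _
      constructor
      · intro hl
        rcases lt_or_ge l (Qi p r qinv i) with h' | h'
        · exact Or.inl h'
        · exact Or.inr ⟨h', hl⟩
      · rintro (h' | ⟨-, h'⟩)
        · exact lt_trans h' hlt
        · exact h'
    have hdisj : Disjoint ((Rset p q qinv).filter fun l => l < Qi p r qinv i)
        ((Rset p q qinv).filter fun l =>
          Qi p r qinv i ≤ l ∧ l < Qi p r qinv (i + 1)) := by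
      rw [Finset.disjoint_left]
      intro l h1 h2
      simp only [Finset.mem_filter] at h1 h2
      exact absurd h2.2.1 (not_le.2 h1.2)
    rw [hsplit, Finset.card_union_of_disjoint hdisj]

end TTKaux


theorem stmt1 (p q r : ℕ) (qinv : ℤ) (hcop : Nat.Coprime p q)
    (hq0 : 0 < q) (hqp : q < p) (hr1 : 1 < r) (hrp : r < p)
    (hqinv : ((q : ℤ) * qinv) % (p : ℤ) = 1) :
    ∀ i < r, ∀ n < r, Qi p r qinv i = res p ((n : ℤ) * qinv) →
      Qi p r qinv i * (q : ℤ) = (kbar p q r qinv i : ℤ) * (p : ℤ) + (n : ℤ) := by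
  intro i hi n hn hQ
  have hp1 : 1 < p := by omega
  have hp0 : 0 < p := by omega
  have hrple : r ≤ p := le_of_lt hrp
  set x := Qi p r qinv i with hxdef
  have hxb : 0 ≤ x ∧ x < p :=
    TTKaux.Qset_mem_bounds hp0 (TTKaux.Qi_mem hp1 hrple hqinv hi)
  -- the residue of x*q mod p is n
  have hmod : (x * q) % p = n := by
    have key : (res p ((n : ℤ) * qinv) * q) % p = (n : ℤ) % p :=
      TTKaux.res_mul_q hp1 hqinv _
    rw [hQ, key]
    exact Int.emod_eq_of_lt (by positivity)
      (by exact_mod_cast lt_trans hn hrp)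
  -- kbar i equals the floor of x*q/p
  have hcount : (kbar p q r qinv i : ℤ) = (x * q) / p := by
    have h1 := TTKaux.kbar_eq_count hp1 hqp (by omega) hrple hqinv i hi
    have h2 := TTKaux.count_lt hp1 hqp hqinv x.toNat
      (by
        have : (x.toNat : ℤ) < (p : ℤ) := by
          rw [Int.toNat_of_nonneg hxb.1]; exact hxb.2
        exact_mod_cast le_of_lt this)
    rw [Int.toNat_of_nonneg hxb.1] at h2
    rw [h1, h2]
    push_cast [Int.natCast_ediv]
    rw [Int.toNat_of_nonneg hxb.1]
  have hde := Int.mul_ediv_add_emod (x * q) p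
  rw [hmod] at hde
  rw [hcount]
  linarith [hde]
end
end

section
/- Q'·q = k̄'·p + r. -/
open Finset

noncomputable section

open TTK
open Finset


section Aux

variable {p q r : ℕ} {qinv : ℤ}

lemma res_nonneg (hp : 0 < p) (x : ℤ) : 0 ≤ res p x :=
  Int.emod_nonneg x (by exact_mod_cast hp.ne')

lemma res_lt (hp : 0 < p) (x : ℤ) : res p x < p :=
  Int.emod_lt_of_pos x (by exact_mod_cast hp)

lemma res_modeq (p : ℕ) (x : ℤ) : res p x ≡ x [ZMOD (p:ℤ)] :=
  Int.emod_emod_of_dvd x dvd_rfl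

lemma eq_of_modeq_small {a b : ℤ} (h : a ≡ b [ZMOD (p:ℤ)]) (ha : 0 ≤ a) (ha' : a < p)
    (hb : 0 ≤ b) (hb' : b < p) : a = b := by
  have h2 : a % p = b % p := h
  rwa [Int.emod_eq_of_lt ha ha', Int.emod_eq_of_lt hb hb'] at h2

lemma qinv_modeq_one (hp1 : 1 < (p:ℤ)) (hqinv : ((q : ℤ) * qinv) % (p : ℤ) = 1) :
    (q:ℤ) * qinv ≡ 1 [ZMOD (p:ℤ)] := by
  have : (1:ℤ) % p = 1 := Int.emod_eq_of_lt (by norm_num) hp1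
  show ((q:ℤ) * qinv) % p = 1 % p
  rw [hqinv, this]

lemma res_mul_q (hp1 : 1 < (p:ℤ)) (hqinv : ((q : ℤ) * qinv) % (p : ℤ) = 1) (x : ℤ) :
    res p (x * qinv) * (q:ℤ) ≡ x [ZMOD (p:ℤ)] :=
  calc res p (x * qinv) * (q:ℤ) ≡ x * qinv * q [ZMOD (p:ℤ)] :=
        (res_modeq p (x * qinv)).mul_right _
    _ = x * ((q:ℤ) * qinv) := by ring
    _ ≡ x * 1 [ZMOD (p:ℤ)] := (qinv_modeq_one hp1 hqinv).mul_left _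
    _ = x := mul_one x

lemma res_qinv_inj (hp1 : 1 < (p:ℤ)) (hqinv : ((q : ℤ) * qinv) % (p : ℤ) = 1)
    {a b : ℤ} (ha : 0 ≤ a) (ha' : a < p) (hb : 0 ≤ b) (hb' : b < p)
    (h : res p (a * qinv) = res p (b * qinv)) : a = b := by
  have h1 := res_mul_q (q := q) hp1 hqinv a
  have h2 := res_mul_q (q := q) hp1 hqinv b
  rw [h] at h1
  exact eq_of_modeq_small (h1.symm.trans h2) ha ha' hb hb'

lemma Qset_card (hp1 : 1 < (p:ℤ)) (hrp : r < p) (hqinv : ((q : ℤ) * qinv) % (p : ℤ) = 1) :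
    (Qset p r qinv).card = r := by
  rw [Qset, Finset.card_image_of_injOn, Finset.card_range]
  intro a ha b hb h
  simp only [Finset.coe_range, Set.mem_Iio] at ha hb
  have h2 : (a:ℤ) = b := res_qinv_inj (q := q) hp1 hqinv (by positivity)
    (by exact_mod_cast lt_trans ha hrp) (by positivity)
    (by exact_mod_cast lt_trans hb hrp) h
  exact_mod_cast h2

end Aux

section Aux2
variable {p q r : ℕ} {qinv : ℤ}

lemma Qi_lt_Qi (hcard : (Qset p r qinv).card = r) {i j : ℕ} (hij : i < j) (hj : j < r) :
    Qi p r qinv i < Qi p r qinv j := by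
  have hlen : ((Qset p r qinv).sort (· ≤ ·)).length = r := by
    rw [Finset.length_sort, hcard]
  rw [Qi, Qi, List.getD_eq_getElem _ _ (by omega : i < ((Qset p r qinv).sort (· ≤ ·)).length),
    List.getD_eq_getElem _ _ (by omega : j < ((Qset p r qinv).sort (· ≤ ·)).length)]
  exact (Finset.sortedLT_sort _).strictMono_get (show (⟨i, by omega⟩ : Fin ((Qset p r qinv).sort (· ≤ ·)).length) < ⟨j, by omega⟩ from hij)

lemma Qset_eq_image (hcard : (Qset p r qinv).card = r) :
    Qset p r qinv = (Finset.range r).image (Qi p r qinv) := by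
  have hlen : ((Qset p r qinv).sort (· ≤ ·)).length = r := by
    rw [Finset.length_sort, hcard]
  ext x
  simp only [Finset.mem_image, Finset.mem_range]
  constructor
  · intro hx
    have hx' : x ∈ (Qset p r qinv).sort (· ≤ ·) := (Finset.mem_sort _).mpr hx
    obtain ⟨n, hn⟩ := List.mem_iff_get.mp hx'
    refine ⟨n.1, by omega, ?_⟩
    rw [Qi, List.getD_eq_get _ _ n]
    exact hn
  · rintro ⟨i, hi, rfl⟩
    rw [Qi, List.getD_eq_getElem _ _ (by omega : i < ((Qset p r qinv).sort (· ≤ ·)).length)]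
    exact (Finset.mem_sort _).mp (List.get_mem _ _)

lemma Qset_nonneg (hp : 0 < p) {x : ℤ} (hx : x ∈ Qset p r qinv) : 0 ≤ x := by
  obtain ⟨n, _, rfl⟩ := Finset.mem_image.mp hx
  exact res_nonneg hp _

lemma Qi_mem (hcard : (Qset p r qinv).card = r) {i : ℕ} (hi : i < r) :
    Qi p r qinv i ∈ Qset p r qinv := by
  rw [Qset_eq_image hcard]
  exact Finset.mem_image.mpr ⟨i, Finset.mem_range.mpr hi, rfl⟩

lemma Qi_zero (hp : 0 < p) (hcard : (Qset p r qinv).card = r) (hr0 : 0 < r) :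
    Qi p r qinv 0 = 0 := by
  have h0 : (0:ℤ) ∈ Qset p r qinv := by
    rw [Qset]
    exact Finset.mem_image.mpr ⟨0, Finset.mem_range.mpr hr0, by simp [res]⟩
  rw [Qset_eq_image hcard] at h0
  obtain ⟨j, hj, hje⟩ := Finset.mem_image.mp h0
  rw [Finset.mem_range] at hj
  rcases Nat.eq_zero_or_pos j with rfl | hjpos
  · exact hje
  · exfalso
    have h1 : Qi p r qinv 0 < Qi p r qinv j := Qi_lt_Qi hcard hjpos hj
    have h2 : 0 ≤ Qi p r qinv 0 := Qset_nonneg hp (Qi_mem hcard (by omega))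
    omega

lemma Qp'_not_mem (hp1 : 1 < (p:ℤ)) (hrp : r < p)
    (hqinv : ((q : ℤ) * qinv) % (p : ℤ) = 1) : Qp' p r qinv ∉ Qset p r qinv := by
  intro h
  obtain ⟨n, hn, he⟩ := Finset.mem_image.mp h
  rw [Finset.mem_range] at hn
  have h2 : (n:ℤ) = (r:ℤ) := res_qinv_inj (q := q) hp1 hqinv (by positivity)
    (by exact_mod_cast lt_trans hn hrp) (by positivity) (by exact_mod_cast hrp) he
  have : n = r := by exact_mod_cast h2
  omega

end Aux2

section Aux3
variable {p q r : ℕ} {qinv : ℤ}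

lemma mem_Rset_iff (hp1 : 1 < (p:ℤ)) (hq0 : 0 < q) (hqp : q < p)
    (hqinv : ((q : ℤ) * qinv) % (p : ℤ) = 1) (l : ℤ) :
    l ∈ Rset p q qinv ↔ 0 ≤ l ∧ l < p ∧ (p:ℤ) - q ≤ (l * q) % p := by
  have hp0 : 0 < p := by omega
  constructor
  · intro hl
    obtain ⟨n, hn, rfl⟩ := Finset.mem_image.mp hl
    rw [Finset.mem_Icc] at hn
    have hn1 : (1:ℤ) ≤ n := by exact_mod_cast hn.1
    have hnq : (n:ℤ) ≤ q := by exact_mod_cast hn.2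
    have hqp' : (q:ℤ) < p := by exact_mod_cast hqp
    refine ⟨res_nonneg hp0 _, res_lt hp0 _, ?_⟩
    have h1 : res p (-(n:ℤ) * qinv) * q ≡ -(n:ℤ) [ZMOD (p:ℤ)] := res_mul_q hp1 hqinv _
    have h2 : (-(n:ℤ)) ≡ (p:ℤ) - n [ZMOD (p:ℤ)] :=
      Int.modEq_iff_dvd.mpr ⟨1, by ring⟩
    have h3 : (res p (-(n:ℤ) * qinv) * q) % p = ((p:ℤ) - n) % p := h1.trans h2
    rw [h3, Int.emod_eq_of_lt (by omega) (by omega)]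
    omega
  · rintro ⟨h0, h1, h2⟩
    have he0 : 0 ≤ (l * q) % p := Int.emod_nonneg _ (by omega)
    have hep : (l * q) % p < p := Int.emod_lt_of_pos _ (by omega)
    set n : ℕ := ((p:ℤ) - (l * q) % p).toNat with hn
    have hcast : (n:ℤ) = (p:ℤ) - (l * q) % p := Int.toNat_of_nonneg (by omega)
    have hqp' : (q:ℤ) < p := by exact_mod_cast hqp
    refine Finset.mem_image.mpr ⟨n, Finset.mem_Icc.mpr ⟨?_, ?_⟩, ?_⟩
    · have : (1:ℤ) ≤ n := by omega
      exact_mod_cast this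
    · have : (n:ℤ) ≤ q := by omega
      exact_mod_cast this
    · refine (eq_of_modeq_small (p := p) ?_ (res_nonneg hp0 _) (res_lt hp0 _) h0 h1)
      calc res p (-(n:ℤ) * qinv) ≡ -(n:ℤ) * qinv [ZMOD (p:ℤ)] := res_modeq p _
        _ ≡ ((p:ℤ) - n) * qinv [ZMOD (p:ℤ)] :=
            (Int.modEq_iff_dvd.mpr ⟨qinv, by ring⟩)
        _ = ((l * q) % p) * qinv := by rw [hcast]; ring
        _ ≡ (l * q) * qinv [ZMOD (p:ℤ)] := (res_modeq p (l * q)).mul_right qinv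
        _ = l * ((q:ℤ) * qinv) := by ring
        _ ≡ l * 1 [ZMOD (p:ℤ)] := (qinv_modeq_one hp1 hqinv).mul_left l
        _ = l := mul_one l

lemma filter_split (S : Finset ℤ) {a b : ℤ} (hab : a ≤ b) :
    (S.filter (fun l => l < b)).card
      = (S.filter (fun l => l < a)).card + (S.filter (fun l => a ≤ l ∧ l < b)).card := by
  have h1 : (S.filter (fun l => l < b)).filter (fun l => l < a)
      = S.filter (fun l => l < a) := by
    rw [Finset.filter_filter]
    exact Finset.filter_congr (fun x _ => by omega)
  have h2 : (S.filter (fun l => l < b)).filter (fun l => ¬ l < a)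
      = S.filter (fun l => a ≤ l ∧ l < b) := by
    rw [Finset.filter_filter]
    exact Finset.filter_congr (fun x _ => by omega)
  rw [← h1, ← h2]
  exact (Finset.card_filter_add_card_filter_not _).symm

lemma ediv_step {P X Q : ℤ} (hP : 0 < P) (hQ0 : 0 ≤ Q) (hQP : Q < P) :
    (X + Q) / P = X / P + if P - Q ≤ X % P then 1 else 0 := by
  have h := Int.mul_ediv_add_emod X P
  have he0 : 0 ≤ X % P := Int.emod_nonneg _ hP.ne'
  have heP : X % P < P := Int.emod_lt_of_pos _ hP
  have hrw : X + Q = (X % P + Q) + (X / P) * P := by linarith [h]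
  rw [hrw, Int.add_mul_ediv_right _ _ hP.ne']
  split_ifs with hc
  · have hrw2 : X % P + Q = (X % P + Q - P) + 1 * P := by ring
    rw [hrw2, Int.add_mul_ediv_right _ _ hP.ne',
      Int.ediv_eq_zero_of_lt (by omega) (by omega)]
    omega
  · rw [Int.ediv_eq_zero_of_lt (by omega) (by omega)]
    omega

end Aux3

section Aux4
variable {p q r : ℕ} {qinv : ℤ}

lemma Rcount (hp1 : 1 < (p:ℤ)) (hq0 : 0 < q) (hqp : q < p)
    (hqinv : ((q : ℤ) * qinv) % (p : ℤ) = 1) :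
    ∀ N : ℕ, (N:ℤ) ≤ p →
      ((((Rset p q qinv).filter (fun l => l < (N:ℤ))).card : ℤ)) = (N:ℤ) * q / p := by
  have hp0 : 0 < p := by omega
  intro N
  induction N with
  | zero =>
    intro _
    have : (Rset p q qinv).filter (fun l => l < ((0:ℕ):ℤ)) = ∅ := by
      rw [Finset.filter_eq_empty_iff]
      intro x hx
      have := (mem_Rset_iff hp1 hq0 hqp hqinv x).mp hx
      push_cast
      omega
    rw [this]
    simp
  | succ n ih =>
    intro hn
    have hn' : (n:ℤ) ≤ p := by push_cast at hn ⊢; omega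
    have hnp : (n:ℤ) < p := by push_cast at hn; omega
    have hcast : ((n+1:ℕ):ℤ) = (n:ℤ) + 1 := by push_cast; ring
    have hsplit := filter_split (Rset p q qinv) (a := (n:ℤ)) (b := ((n+1:ℕ):ℤ))
      (by omega)
    have hmid : (Rset p q qinv).filter (fun l => (n:ℤ) ≤ l ∧ l < ((n+1:ℕ):ℤ))
        = (Rset p q qinv).filter (fun l => l = (n:ℤ)) :=
      Finset.filter_congr (fun x _ => by omega)
    rw [hmid, Finset.filter_eq'] at hsplit
    have hq' : (0:ℤ) ≤ q := by positivity
    have hqp' : (q:ℤ) < p := by exact_mod_cast hqp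
    have hstep : ((n:ℤ) * q + q) / p
        = (n:ℤ) * q / p + if (p:ℤ) - q ≤ ((n:ℤ) * q) % p then 1 else 0 :=
      ediv_step (by omega) hq' hqp'
    rw [hsplit]
    push_cast
    rw [ih hn', show ((n:ℤ) + 1) * q = (n:ℤ) * q + q by ring, hstep]
    by_cases hc : (p:ℤ) - q ≤ ((n:ℤ) * q) % p
    · have hmem : (n:ℤ) ∈ Rset p q qinv :=
        (mem_Rset_iff hp1 hq0 hqp hqinv _).mpr ⟨by positivity, hnp, hc⟩
      rw [if_pos hmem, if_pos hc]
      simp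
    · have hmem : (n:ℤ) ∉ Rset p q qinv := fun h => by
        have := (mem_Rset_iff hp1 hq0 hqp hqinv _).mp h
        exact hc this.2.2
      rw [if_neg hmem, if_neg hc]
      simp

lemma dc_mem_iff (S : Finset ℕ) (h : ∀ i j : ℕ, i ≤ j → j ∈ S → i ∈ S) (i : ℕ) :
    i ∈ S ↔ i < S.card := by
  constructor
  · intro hi
    have hsub : Finset.range (i+1) ⊆ S := fun j hj =>
      h j i (Nat.lt_succ_iff.mp (Finset.mem_range.mp hj)) hi
    have := Finset.card_le_card hsub
    rw [Finset.card_range] at this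
    omega
  · intro hi
    by_contra hni
    have hsub : S ⊆ Finset.range i := fun j hj => Finset.mem_range.mpr (by
      by_contra hji
      exact hni (h i j (by omega) hj))
    have := Finset.card_le_card hsub
    rw [Finset.card_range] at this
    omega

end Aux4

section Aux5
variable {p q r : ℕ} {qinv : ℤ}

lemma Qi_lt_Qp'_iff (hp1 : 1 < (p:ℤ)) (hrp : r < p)
    (hqinv : ((q : ℤ) * qinv) % (p : ℤ) = 1)
    (hcard : (Qset p r qinv).card = r) {i : ℕ} (hi : i < r) :
    Qi p r qinv i < Qp' p r qinv ↔
      i < ((Qset p r qinv).filter (fun x => x < Qp' p r qinv)).card := by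
  set S := (Finset.range r).filter (fun j => Qi p r qinv j < Qp' p r qinv) with hS
  have himg : (Qset p r qinv).filter (fun x => x < Qp' p r qinv) = S.image (Qi p r qinv) := by
    rw [Qset_eq_image hcard, Finset.filter_image]
  have hinj : Set.InjOn (Qi p r qinv) ↑S := by
    intro a ha b hb hab
    simp only [hS, Finset.coe_filter, Set.mem_setOf_eq, Finset.mem_range] at ha hb
    rcases lt_trichotomy a b with h | h | h
    · exact absurd hab (Qi_lt_Qi hcard h hb.1).ne
    · exact h
    · exact absurd hab.symm (Qi_lt_Qi hcard h ha.1).ne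
  have hcardim : ((Qset p r qinv).filter (fun x => x < Qp' p r qinv)).card = S.card := by
    rw [himg, Finset.card_image_of_injOn hinj]
  have hdc : ∀ a b : ℕ, a ≤ b → b ∈ S → a ∈ S := by
    intro a b hab hb
    simp only [hS, Finset.mem_filter, Finset.mem_range] at hb ⊢
    refine ⟨by omega, ?_⟩
    rcases eq_or_lt_of_le hab with rfl | h
    · exact hb.2
    · exact (Qi_lt_Qi hcard h hb.1).trans hb.2
  rw [hcardim, ← dc_mem_iff S hdc i]
  simp [hS, Finset.mem_filter, Finset.mem_range, hi]

end Aux5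

theorem stmt2 (p q r : ℕ) (qinv : ℤ) (hcop : Nat.Coprime p q)
    (hq0 : 0 < q) (hqp : q < p) (hr1 : 1 < r) (hrp : r < p)
    (hqinv : ((q : ℤ) * qinv) % (p : ℤ) = 1) :
    Qp' p r qinv * (q : ℤ) = (kbar' p q r qinv : ℤ) * (p : ℤ) + (r : ℤ) := by
  have hp0 : 0 < p := by omega
  have hp1 : 1 < (p:ℤ) := by exact_mod_cast (by omega : 1 < p)
  have hcard : (Qset p r qinv).card = r := Qset_card (q := q) hp1 hrp hqinv
  have hQ'0 : 0 ≤ Qp' p r qinv := res_nonneg hp0 _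
  have hQ'p : Qp' p r qinv < p := res_lt hp0 _
  have h0mem : (0:ℤ) ∈ Qset p r qinv := by
    rw [← Qi_zero hp0 hcard (by omega)]
    exact Qi_mem hcard (by omega)
  have hQ'pos : 0 < Qp' p r qinv := by
    rcases eq_or_lt_of_le hQ'0 with h | h
    · exact absurd (show Qp' p r qinv ∈ Qset p r qinv by rw [← h]; exact h0mem)
        (Qp'_not_mem (q := q) hp1 hrp hqinv)
    · exact h
  have hF1 : 1 ≤ ((Qset p r qinv).filter (fun x => x < Qp' p r qinv)).card :=
    Finset.card_pos.mpr ⟨0, Finset.mem_filter.mpr ⟨h0mem, hQ'pos⟩⟩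
  have hFle : ((Qset p r qinv).filter (fun x => x < Qp' p r qinv)).card ≤ r := by
    calc ((Qset p r qinv).filter (fun x => x < Qp' p r qinv)).card
        ≤ (Qset p r qinv).card := Finset.card_filter_le _ _
      _ = r := hcard
  have hm1 : mIdx p r qinv + 1
      = ((Qset p r qinv).filter (fun x => x < Qp' p r qinv)).card := by
    show ((Qset p r qinv).filter (fun x => x < Qp' p r qinv)).card - 1 + 1 = _
    omega
  have hmr : mIdx p r qinv < r := by omega
  have hmlt : Qi p r qinv (mIdx p r qinv) < Qp' p r qinv :=
    (Qi_lt_Qp'_iff hp1 hrp hqinv hcard hmr).mpr (by omega)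
  have claim : ∀ i, i ≤ mIdx p r qinv →
      kbar p q r qinv i = ((Rset p q qinv).filter (fun l => l < Qi p r qinv i)).card := by
    intro i
    induction i with
    | zero =>
      intro _
      rw [kbar, Qi_zero hp0 hcard (by omega)]
      have hempty : (Rset p q qinv).filter (fun l => l < (0:ℤ)) = ∅ := by
        rw [Finset.filter_eq_empty_iff]
        intro x hx
        have := (mem_Rset_iff hp1 hq0 hqp hqinv x).mp hx
        omega
      rw [hempty]
      simp
    | succ n ih =>
      intro hsm
      have hnm : n ≤ mIdx p r qinv := by omega
      have hnr : n + 1 < r := by omega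
      have ihn := ih hnm
      rw [kbar] at ihn ⊢
      rw [Finset.sum_Icc_succ_top (by omega), ihn, ki,
        if_neg (by omega : ¬ n + 1 = r)]
      have hsub : n + 1 - 1 = n := rfl
      rw [hsub]
      exact (filter_split _ (le_of_lt (Qi_lt_Qi hcard (by omega) hnr))).symm
  have hkbar' : (kbar' p q r qinv)
      = ((Rset p q qinv).filter (fun l => l < Qp' p r qinv)).card := by
    rw [kbar', claim _ le_rfl, k']
    exact (filter_split _ (le_of_lt hmlt)).symm
  have hcount := Rcount hp1 hq0 hqp hqinv (Qp' p r qinv).toNat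
    (by rw [Int.toNat_of_nonneg hQ'0]; omega)
  rw [Int.toNat_of_nonneg hQ'0] at hcount
  have hmod : (Qp' p r qinv * q) % p = r := by
    calc (Qp' p r qinv * q) % p = (r:ℤ) % p := res_mul_q hp1 hqinv r
      _ = r := Int.emod_eq_of_lt (by positivity) (by exact_mod_cast hrp)
  have hdm := Int.mul_ediv_add_emod (Qp' p r qinv * q) p
  rw [hmod] at hdm
  rw [hkbar', hcount]
  linarith [hdm]
end
end

section
/- m₂ = (t^(q+rs) / ((1−t^p)(1−t^q))) · (X̃(t)Y(t) − Ỹ(t)X(t)) in ℚ(t). -/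
open Finset

noncomputable section

namespace TTK

/-- `Q_i` extended by the convention `Q_r = p`. -/
def QiE (p r : ℕ) (qinv : ℤ) (i : ℕ) : ℤ := if i = r then (p : ℤ) else Qi p r qinv i

/-- `X(t)`. -/
def XX (p q r : ℕ) (qinv s : ℤ) : RatFunc ℚ :=
  1 - (1 - RatFunc.X ^ ((r : ℤ) * s)) *
        ∑ i ∈ Finset.Icc 1 (r - 1),
          RatFunc.X ^ ((kbar p q r qinv i : ℤ) * (p : ℤ) + ((i : ℤ) - 1) * ((r : ℤ) * s))
    - RatFunc.X ^ ((p : ℤ) * (q : ℤ) + ((r : ℤ) - 1) * ((r : ℤ) * s))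

/-- `X̃(t)`. -/
def XXt (p q r : ℕ) (qinv s : ℤ) : RatFunc ℚ :=
  1 - (1 - RatFunc.X ^ ((r : ℤ) * s)) *
        ∑ i ∈ Finset.Icc 1 (mIdx p r qinv),
          RatFunc.X ^ ((kbar p q r qinv i : ℤ) * (p : ℤ) + ((i : ℤ) - 1) * ((r : ℤ) * s))
    - RatFunc.X ^ ((kbar' p q r qinv : ℤ) * (p : ℤ) + (mIdx p r qinv : ℤ) * ((r : ℤ) * s))

/-- `Y(t)`. -/
def YY (p q r : ℕ) (qinv s : ℤ) : RatFunc ℚ :=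
  1 - (1 - RatFunc.X ^ ((r : ℤ) * s)) *
        ∑ i ∈ Finset.Icc 1 (r - 1),
          RatFunc.X ^ (Qi p r qinv i * (q : ℤ) + ((i : ℤ) - 1) * ((r : ℤ) * s))
    - RatFunc.X ^ ((p : ℤ) * (q : ℤ) + ((r : ℤ) - 1) * ((r : ℤ) * s))

/-- `Ỹ(t)`. -/
def YYt (p q r : ℕ) (qinv s : ℤ) : RatFunc ℚ :=
  1 - (1 - RatFunc.X ^ ((r : ℤ) * s)) *
        ∑ i ∈ Finset.Icc 1 (mIdx p r qinv),
          RatFunc.X ^ (Qi p r qinv i * (q : ℤ) + ((i : ℤ) - 1) * ((r : ℤ) * s))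
    - RatFunc.X ^ (Qp' p r qinv * (q : ℤ) + (mIdx p r qinv : ℤ) * ((r : ℤ) * s))

def a11 (p q r : ℕ) (qinv s : ℤ) : RatFunc ℚ :=
  XXt p q r qinv s / (1 - RatFunc.X ^ (p : ℤ))

def a12 (p q r : ℕ) (qinv s : ℤ) : RatFunc ℚ :=
  ((1 - RatFunc.X ^ ((r : ℤ) * s)) / (1 - RatFunc.X ^ (r : ℤ))) *
      ∑ i ∈ Finset.Icc 1 (mIdx p r qinv),
        RatFunc.X ^ ((kbar p q r qinv i : ℤ) * (p : ℤ) + ((i : ℤ) - 1) * ((r : ℤ) * s))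
    + RatFunc.X ^ ((kbar' p q r qinv : ℤ) * (p : ℤ) + (mIdx p r qinv : ℤ) * ((r : ℤ) * s))

def a13 (p q r : ℕ) (qinv s : ℤ) : RatFunc ℚ :=
  RatFunc.X ^ (q : ℤ) * YYt p q r qinv s / (1 - RatFunc.X ^ (q : ℤ))

def a14 (p q r : ℕ) (qinv s : ℤ) : RatFunc ℚ :=
  RatFunc.X ^ ((r : ℤ) * s) *
    ∑ i ∈ Finset.Icc 1 (mIdx p r qinv),
      RatFunc.X ^ (Qi p r qinv i * (q : ℤ) + ((i : ℤ) - 1) * ((r : ℤ) * s))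

def a22 (r : ℕ) (s : ℤ) : RatFunc ℚ :=
  (1 - RatFunc.X ^ ((r : ℤ) * s)) / (1 - RatFunc.X ^ (r : ℤ))

def a24 (r : ℕ) (s : ℤ) : RatFunc ℚ := RatFunc.X ^ ((r : ℤ) * s)

def a31 (p q r : ℕ) (qinv s : ℤ) : RatFunc ℚ :=
  XX p q r qinv s / (1 - RatFunc.X ^ (p : ℤ))

def a32 (p q r : ℕ) (qinv s : ℤ) : RatFunc ℚ :=
  ((1 - RatFunc.X ^ ((r : ℤ) * s)) / (1 - RatFunc.X ^ (r : ℤ))) *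
    ∑ i ∈ Finset.Icc 1 r,
      RatFunc.X ^ ((kbar p q r qinv i : ℤ) * (p : ℤ) + ((i : ℤ) - 1) * ((r : ℤ) * s))

def a33 (p q r : ℕ) (qinv s : ℤ) : RatFunc ℚ :=
  RatFunc.X ^ (q : ℤ) * YY p q r qinv s / (1 - RatFunc.X ^ (q : ℤ))

def a34 (p q r : ℕ) (qinv s : ℤ) : RatFunc ℚ :=
  ∑ i ∈ Finset.Icc 1 r,
    RatFunc.X ^ (QiE p r qinv i * (q : ℤ) + (i : ℤ) * ((r : ℤ) * s))

/-- The minor `m₁`. -/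
def minor1 (p q r : ℕ) (qinv s : ℤ) : RatFunc ℚ :=
  a13 p q r qinv s * (a22 r s * a34 p q r qinv s - a24 r s * a32 p q r qinv s) +
    a33 p q r qinv s * (a12 p q r qinv s * a24 r s - a14 p q r qinv s * a22 r s)

/-- The minor `m₂`. -/
def minor2 (p q r : ℕ) (qinv s : ℤ) : RatFunc ℚ :=
  a24 r s * (a11 p q r qinv s * a33 p q r qinv s - a13 p q r qinv s * a31 p q r qinv s)

/-- The minor `m₃`. -/
def minor3 (p q r : ℕ) (qinv s : ℤ) : RatFunc ℚ :=
  a22 r s * (a11 p q r qinv s * a34 p q r qinv s - a14 p q r qinv s * a31 p q r qinv s) -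
    a24 r s * (a11 p q r qinv s * a32 p q r qinv s - a12 p q r qinv s * a31 p q r qinv s)

/-- `ord₀ f`, the order of vanishing of `f` at `t = 0`. -/
def ord0 (f : RatFunc ℚ) : ℤ :=
  (f.num.rootMultiplicity 0 : ℤ) - (f.denom.rootMultiplicity 0 : ℤ)

/-- `span f = deg f − ord₀ f`. -/
def spanDeg (f : RatFunc ℚ) : ℤ := f.intDegree - ord0 f

/-- `D(t)`, the paper's formula for the Alexander polynomial of `T(p,q;r,s)`. -/
def DD (p q r : ℕ) (qinv s : ℤ) : RatFunc ℚ :=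
  (1 - RatFunc.X) *
      (XXt p q r qinv s * YY p q r qinv s - XX p q r qinv s * YYt p q r qinv s) /
    ((1 - RatFunc.X ^ (p : ℤ)) * (1 - RatFunc.X ^ (q : ℤ)) * (1 - RatFunc.X ^ (r : ℤ)))

end TTK

open TTK

lemma one_sub_X_pow_ne_zero (n : ℕ) (hn : 0 < n) :
    (1 - RatFunc.X ^ (n : ℤ) : RatFunc ℚ) ≠ 0 := by
  rw [zpow_natCast, sub_ne_zero]
  intro h
  apply_fun RatFunc.intDegree at h
  rw [RatFunc.intDegree_one, ← RatFunc.algebraMap_X, ← map_pow,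
    RatFunc.intDegree_polynomial, Polynomial.natDegree_X_pow] at h
  omega

theorem stmt7 (p q r : ℕ) (qinv s : ℤ) (hcop : Nat.Coprime p q)
    (hq0 : 0 < q) (hqp : q < p) (hr1 : 1 < r) (hrp : r < p)
    (hqinv : ((q : ℤ) * qinv) % (p : ℤ) = 1) :
    minor2 p q r qinv s =
      RatFunc.X ^ ((q : ℤ) + (r : ℤ) * s) /
          ((1 - RatFunc.X ^ (p : ℤ)) * (1 - RatFunc.X ^ (q : ℤ))) *
        (XXt p q r qinv s * YY p q r qinv s - YYt p q r qinv s * XX p q r qinv s) := by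
  have hx : (RatFunc.X : RatFunc ℚ) ≠ 0 := RatFunc.X_ne_zero
  have hp : (1 - RatFunc.X ^ (p : ℤ) : RatFunc ℚ) ≠ 0 :=
    one_sub_X_pow_ne_zero p (by omega)
  have hqn : (1 - RatFunc.X ^ (q : ℤ) : RatFunc ℚ) ≠ 0 :=
    one_sub_X_pow_ne_zero q hq0
  unfold minor2 a24 a11 a33 a13 a31
  rw [zpow_add₀ hx]
  field_simp
end
end

section
/- m₃ = (t^(rs) / ((1−t^p)(1−t^r))) · (X(t)Ỹ(t) − Y(t)X̃(t)) in ℚ(t). -/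
open Finset

noncomputable section

open TTK

namespace TTKAux
open TTK

section basic
open TTK
variable (p q : ℕ) (qinv : ℤ)

lemma res_nonneg (hp : 0 < p) (x : ℤ) : 0 ≤ res p x :=
  Int.emod_nonneg _ (by exact_mod_cast hp.ne')

lemma res_lt (hp : 0 < p) (x : ℤ) : res p x < p :=
  Int.emod_lt_of_pos _ (by exact_mod_cast hp)

lemma res_modeq (x : ℤ) : res p x ≡ x [ZMOD p] := Int.emod_emod_of_dvd _ dvd_rfl

lemma res_eq_of (hp : 0 < p) {x y : ℤ} (h : x ≡ y [ZMOD p]) (h0 : 0 ≤ y) (h1 : y < p) :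
    res p x = y := by
  have : res p x ≡ y [ZMOD p] := (res_modeq p x).trans h
  have h2 := res_nonneg p hp x
  have h3 := res_lt p hp x
  have := Int.ModEq.dvd this
  rcases this with ⟨k, hk⟩
  have hk0 : k = 0 := by nlinarith [hk]
  rw [hk0, mul_zero] at hk
  omega

lemma modeq_cancel (hp : 1 < p) (hqinv : ((q : ℤ) * qinv) % (p : ℤ) = 1)
    {a b : ℤ} (h : a * qinv ≡ b * qinv [ZMOD p]) : a ≡ b [ZMOD p] := by
  have h1 : (q : ℤ) * qinv ≡ 1 [ZMOD p] := by
    unfold Int.ModEq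
    rw [hqinv, Int.emod_eq_of_lt (by norm_num) (by exact_mod_cast hp)]
  have h2 : a * (qinv * q) ≡ b * (qinv * q) [ZMOD p] := by
    have := h.mul_right (q : ℤ)
    calc a * (qinv * q) = a * qinv * q := by ring
      _ ≡ b * qinv * q [ZMOD p] := this
      _ = b * (qinv * q) := by ring
  have h3 : qinv * (q:ℤ) ≡ 1 [ZMOD p] := by rwa [mul_comm] at h1
  calc a = a * 1 := by ring
    _ ≡ a * (qinv * q) [ZMOD p] := (h3.symm.mul_left a)
    _ ≡ b * (qinv * q) [ZMOD p] := h2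
    _ ≡ b * 1 [ZMOD p] := h3.mul_left b
    _ = b := by ring

end basic


open TTK

variable {p q : ℕ} {qinv : ℤ}

lemma mem_Rset_iff (hp : 1 < p) (hq0 : 0 < q) (hqp : q < p)
    (hqinv : ((q : ℤ) * qinv) % (p : ℤ) = 1) {l : ℤ} :
    l ∈ Rset p q qinv ↔ 0 ≤ l ∧ l < p ∧ (p : ℤ) - q ≤ res p (l * q) := by
  have hp0 : 0 < p := by omega
  have h1 : (q : ℤ) * qinv ≡ 1 [ZMOD p] := by
    unfold Int.ModEq
    rw [hqinv, Int.emod_eq_of_lt (by norm_num) (by exact_mod_cast hp)]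
  constructor
  · intro hl
    obtain ⟨n, hn, rfl⟩ := Finset.mem_image.mp hl
    rw [Finset.mem_Icc] at hn
    refine ⟨res_nonneg p hp0 _, res_lt p hp0 _, ?_⟩
    have hmod : res p (-(n : ℤ) * qinv) * q ≡ -(n : ℤ) [ZMOD p] := by
      calc res p (-(n : ℤ) * qinv) * q ≡ (-(n : ℤ) * qinv) * q [ZMOD p] :=
            (res_modeq p _).mul_right _
        _ = -(n:ℤ) * ((q:ℤ) * qinv) := by ring
        _ ≡ -(n:ℤ) * 1 [ZMOD p] := h1.mul_left _
        _ = -(n:ℤ) := by ring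
    have : res p (res p (-(n : ℤ) * qinv) * q) = (p : ℤ) - n := by
      refine res_eq_of p hp0 (hmod.trans ?_) (by omega) (by omega)
      exact Int.ModEq.symm (Int.modEq_iff_dvd.mpr ⟨-1, by ring⟩)
    rw [this]; omega
  · rintro ⟨h0, h1', h2⟩
    have hlt := res_lt p hp0 (l * q)
    have hge := res_nonneg p hp0 (l * q)
    set j : ℤ := (p : ℤ) - res p (l * q) with hj
    have hj1 : 1 ≤ j := by omega
    have hjq : j ≤ q := by omega
    refine Finset.mem_image.mpr ⟨j.toNat, Finset.mem_Icc.mpr ⟨by omega, by omega⟩, ?_⟩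
    have hjcast : ((j.toNat : ℕ) : ℤ) = j := Int.toNat_of_nonneg (by omega)
    rw [hjcast]
    refine res_eq_of p hp0 ?_ h0 h1'
    -- -(j) * qinv ≡ l [ZMOD p]
    have hlq : l * q ≡ -j [ZMOD p] := by
      have : res p (l * q) ≡ l * q [ZMOD p] := res_modeq p _
      have h3 : l * q ≡ res p (l*q) [ZMOD p] := this.symm
      refine h3.trans ?_
      exact Int.modEq_iff_dvd.mpr ⟨-1, by omega⟩
    calc -j * qinv ≡ (l * q) * qinv [ZMOD p] := (hlq.symm).mul_right qinv
      _ = l * ((q:ℤ) * qinv) := by ring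
      _ ≡ l * 1 [ZMOD p] := h1.mul_left l
      _ = l := by ring

lemma Rset_card (hp : 1 < p) (hqp : q < p)
    (hqinv : ((q : ℤ) * qinv) % (p : ℤ) = 1) : (Rset p q qinv).card = q := by
  rw [Rset, Finset.card_image_of_injOn, Nat.card_Icc]
  · omega
  · intro a ha b hb hab
    rw [Finset.coe_Icc, Set.mem_Icc] at ha hb
    have : (-(a:ℤ)) ≡ (-(b:ℤ)) [ZMOD p] := modeq_cancel p q qinv hp hqinv hab
    have := this.dvd
    rw [show -(b:ℤ) - -(a:ℤ) = (a:ℤ) - b by ring] at this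
    rcases this with ⟨k, hk⟩
    have hk0 : k = 0 := by nlinarith [hk]
    rw [hk0, mul_zero] at hk
    omega

lemma count_lemma (hp : 1 < p) (hq0 : 0 < q) (hqp : q < p)
    (hqinv : ((q : ℤ) * qinv) % (p : ℤ) = 1) :
    ∀ k : ℕ, (k : ℤ) ≤ p →
      (p : ℤ) * ((Rset p q qinv).filter (fun l => l < (k : ℤ))).card
        = (k : ℤ) * q - res p ((k : ℤ) * q) := by
  have hp0 : 0 < p := by omega
  intro k
  induction k with
  | zero =>
    intro _
    have : (Rset p q qinv).filter (fun l => l < ((0:ℕ) : ℤ)) = ∅ := by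
      refine Finset.filter_eq_empty_iff.mpr ?_
      intro l hl
      have := (mem_Rset_iff hp hq0 hqp hqinv).mp hl
      push_cast
      omega
    rw [this]
    simp [res]
  | succ n ih =>
    intro hk
    have hn : (n : ℤ) ≤ p := by push_cast at hk ⊢; omega
    have split : (Rset p q qinv).filter (fun l => l < ((n+1 : ℕ) : ℤ))
        = (Rset p q qinv).filter (fun l => l < (n : ℤ))
          ∪ (Rset p q qinv).filter (fun l => l = (n : ℤ)) := by
      rw [← Finset.filter_or]
      apply Finset.filter_congr
      intro x _
      push_cast
      constructor
      · intro h; omega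
      · intro h; omega
    have hdisj : Disjoint ((Rset p q qinv).filter (fun l => l < (n : ℤ)))
        ((Rset p q qinv).filter (fun l => l = (n : ℤ))) := by
      rw [Finset.disjoint_filter]
      intro x _ h1 h2
      omega
    rw [split, Finset.card_union_of_disjoint hdisj]
    rw [Finset.filter_eq']
    have hres := res_modeq p ((n:ℤ) * q)
    have hlt := res_lt p hp0 ((n:ℤ) * q)
    have hge := res_nonneg p hp0 ((n:ℤ) * q)
    have hmod1 : ((n:ℤ)+1) * q ≡ res p ((n:ℤ)*q) + q [ZMOD p] := by
      have : res p ((n:ℤ)*q) + q ≡ (n:ℤ)*q + q [ZMOD p] := (res_modeq p _).add_right q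
      have h2 : ((n:ℤ)+1)*q = (n:ℤ)*q + q := by ring
      rw [h2]
      exact this.symm
    by_cases hmem : (n : ℤ) ∈ Rset p q qinv
    · rw [if_pos hmem]
      have hR := (mem_Rset_iff hp hq0 hqp hqinv).mp hmem
      have hnew : res p (((n:ℤ)+1) * q) = res p ((n:ℤ)*q) + q - p := by
        refine res_eq_of p hp0 (hmod1.trans ?_) (by omega) (by omega)
        exact Int.ModEq.symm (Int.modEq_iff_dvd.mpr ⟨1, by ring⟩)
      have ihv := ih hn
      simp only [Finset.card_singleton]
      push_cast
      rw [hnew]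
      linarith [ihv]
    · rw [if_neg hmem]
      have hnmem : ¬((p:ℤ) - q ≤ res p ((n:ℤ)*q)) := by
        intro hcon
        exact hmem ((mem_Rset_iff hp hq0 hqp hqinv).mpr ⟨by omega, by push_cast at hk; omega, hcon⟩)
      have hnew : res p (((n:ℤ)+1) * q) = res p ((n:ℤ)*q) + q := by
        refine res_eq_of p hp0 (hmod1.trans ?_) (by omega) (by omega)
        exact Int.ModEq.refl _
      have ihv := ih hn
      simp only [Finset.card_empty]
      push_cast
      rw [hnew]
      linarith [ihv]


section Qpart
variable {r : ℕ}

lemma Qieqtmp : Qi p r qinv = Qi p r qinv := rfl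

lemma mem_Qset_nonneg (hp : 0 < p) {x : ℤ} (hx : x ∈ Qset p r qinv) : 0 ≤ x := by
  obtain ⟨n, _, rfl⟩ := Finset.mem_image.mp hx
  exact res_nonneg p hp _

lemma mem_Qset_lt (hp : 0 < p) {x : ℤ} (hx : x ∈ Qset p r qinv) : x < p := by
  obtain ⟨n, _, rfl⟩ := Finset.mem_image.mp hx
  exact res_lt p hp _

lemma Qset_card (hp : 1 < p) (hrp : r < p)
    (hqinv : ((q : ℤ) * qinv) % (p : ℤ) = 1) : (Qset p r qinv).card = r := by
  rw [Qset, Finset.card_image_of_injOn, Finset.card_range]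
  intro a ha b hb hab
  rw [Finset.coe_range, Set.mem_Iio] at ha hb
  have : ((a:ℤ)) ≡ ((b:ℤ)) [ZMOD p] := modeq_cancel p q qinv hp hqinv hab
  have := this.dvd
  rcases this with ⟨k, hk⟩
  have hk0 : k = 0 := by nlinarith [hk]
  rw [hk0, mul_zero] at hk
  omega

lemma length_sortQ (hp : 1 < p) (hrp : r < p)
    (hqinv : ((q : ℤ) * qinv) % (p : ℤ) = 1) :
    ((Qset p r qinv).sort (· ≤ ·)).length = r := by
  rw [Finset.length_sort, Qset_card hp hrp hqinv]

lemma Qi_get (i : ℕ) (hi : i < ((Qset p r qinv).sort (· ≤ ·)).length) :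
    Qi p r qinv i = ((Qset p r qinv).sort (· ≤ ·)).get ⟨i, hi⟩ := by
  rw [Qi, List.getD_eq_getElem _ _ hi]
  rfl

lemma Qi_mem (hp : 1 < p) (hrp : r < p)
    (hqinv : ((q : ℤ) * qinv) % (p : ℤ) = 1) {i : ℕ} (hi : i < r) :
    Qi p r qinv i ∈ Qset p r qinv := by
  have hi' : i < ((Qset p r qinv).sort (· ≤ ·)).length := by
    rwa [length_sortQ hp hrp hqinv]
  rw [Qi_get i hi']
  exact Finset.mem_sort (· ≤ ·) |>.mp (List.get_mem _ _)

lemma Qi_strictMono (hp : 1 < p) (hrp : r < p)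
    (hqinv : ((q : ℤ) * qinv) % (p : ℤ) = 1) {i j : ℕ} (hij : i < j) (hj : j < r) :
    Qi p r qinv i < Qi p r qinv j := by
  have hj' : j < ((Qset p r qinv).sort (· ≤ ·)).length := by
    rwa [length_sortQ hp hrp hqinv]
  have hi' : i < ((Qset p r qinv).sort (· ≤ ·)).length := by omega
  rw [Qi_get i hi', Qi_get j hj']
  exact List.Pairwise.rel_get_of_lt (Finset.sortedLT_sort _).pairwise (by exact hij)

lemma Qi_zero (hp : 1 < p) (hr0 : 0 < r) (hrp : r < p)
    (hqinv : ((q : ℤ) * qinv) % (p : ℤ) = 1) : Qi p r qinv 0 = 0 := by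
  have h0mem : (0 : ℤ) ∈ Qset p r qinv := by
    refine Finset.mem_image.mpr ⟨0, Finset.mem_range.mpr hr0, ?_⟩
    simp [res]
  have hne : (Qset p r qinv).Nonempty := ⟨0, h0mem⟩
  have hlen : 0 < ((Qset p r qinv).sort (· ≤ ·)).length := by
    rw [length_sortQ hp hrp hqinv]; omega
  rw [Qi_get 0 hlen, List.get_eq_getElem]
  rw [Finset.sorted_zero_eq_min' (s := Qset p r qinv) (h := hlen)]
  refine le_antisymm (Finset.min'_le _ _ h0mem) (Finset.le_min' _ _ _ ?_)
  intro y hy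
  exact mem_Qset_nonneg (by omega) hy

/-- if `i < #{x ∈ Q : x < y}` then `Q_i < y`. -/
lemma Qi_lt_of_lt_count (hp : 1 < p) (hrp : r < p)
    (hqinv : ((q : ℤ) * qinv) % (p : ℤ) = 1) {y : ℤ} {i : ℕ}
    (hi : i < ((Qset p r qinv).filter (fun x => x < y)).card) :
    Qi p r qinv i < y := by
  by_contra hcon
  push_neg at hcon
  -- every element of the filter is Qi j for some j < i
  have hsub : (Qset p r qinv).filter (fun x => x < y)
      ⊆ (Finset.range i).image (Qi p r qinv) := by
    intro x hx
    rw [Finset.mem_filter] at hx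
    obtain ⟨hxQ, hxy⟩ := hx
    have hxL : x ∈ (Qset p r qinv).sort (· ≤ ·) := (Finset.mem_sort _).mpr hxQ
    obtain ⟨⟨j, hj⟩, hget⟩ := List.mem_iff_get.mp hxL
    refine Finset.mem_image.mpr ⟨j, Finset.mem_range.mpr ?_, by rw [Qi_get j hj, hget]⟩
    by_contra hji
    push_neg at hji
    have hile : i ≤ j := hji
    have hi' : i < ((Qset p r qinv).sort (· ≤ ·)).length := by omega
    have : Qi p r qinv i ≤ Qi p r qinv j := by
      rw [Qi_get i hi', Qi_get j hj]
      exact List.Pairwise.rel_get_of_le (Finset.pairwise_sort _ _) hile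
    rw [Qi_get j hj, hget] at this
    omega
  have := Finset.card_le_card hsub
  have h2 : ((Finset.range i).image (Qi p r qinv)).card ≤ i := by
    calc _ ≤ (Finset.range i).card := Finset.card_image_le
      _ = i := Finset.card_range i
  omega


lemma kbar_count (hp : 1 < p) (hq0 : 0 < q) (hqp : q < p) (hrp : r < p)
    (hqinv : ((q : ℤ) * qinv) % (p : ℤ) = 1) :
    ∀ j, j < r →
      kbar p q r qinv j = ((Rset p q qinv).filter (fun l => l < Qi p r qinv j)).card := by
  intro j
  induction j with
  | zero =>
    intro hj
    have h1 : kbar p q r qinv 0 = 0 := by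
      rw [kbar]
      simp
    rw [h1, Qi_zero hp (by omega) hrp hqinv]
    symm
    rw [Finset.card_eq_zero, Finset.filter_eq_empty_iff]
    intro l hl
    have := (mem_Rset_iff hp hq0 hqp hqinv).mp hl
    omega
  | succ i ih =>
    intro hj
    have hlt : Qi p r qinv i < Qi p r qinv (i + 1) :=
      Qi_strictMono hp hrp hqinv (Nat.lt_succ_self i) hj
    have hsum : kbar p q r qinv (i+1) = kbar p q r qinv i + ki p q r qinv (i+1) := by
      rw [kbar, kbar, Finset.sum_Icc_succ_top (by omega)]
    have hki : ki p q r qinv (i+1)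
        = ((Rset p q qinv).filter
            (fun l => Qi p r qinv i ≤ l ∧ l < Qi p r qinv (i+1))).card := by
      rw [ki, if_neg (by omega)]
      norm_num
    have hsplit : (Rset p q qinv).filter (fun l => l < Qi p r qinv (i+1))
        = (Rset p q qinv).filter (fun l => l < Qi p r qinv i)
          ∪ (Rset p q qinv).filter
              (fun l => Qi p r qinv i ≤ l ∧ l < Qi p r qinv (i+1)) := by
      rw [← Finset.filter_or]
      apply Finset.filter_congr
      intro x _
      constructor
      · intro h
        by_cases hc : x < Qi p r qinv i
        · exact Or.inl hc
        · exact Or.inr ⟨by omega, h⟩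
      · intro h
        rcases h with h | h <;> omega
    have hdisj : Disjoint ((Rset p q qinv).filter (fun l => l < Qi p r qinv i))
        ((Rset p q qinv).filter
          (fun l => Qi p r qinv i ≤ l ∧ l < Qi p r qinv (i+1))) := by
      rw [Finset.disjoint_filter]
      intro x _ h1 h2
      omega
    rw [hsum, hki, ih (by omega), hsplit, Finset.card_union_of_disjoint hdisj]

lemma kbar_top (hp : 1 < p) (hq0 : 0 < q) (hqp : q < p) (hr0 : 0 < r) (hrp : r < p)
    (hqinv : ((q : ℤ) * qinv) % (p : ℤ) = 1) :
    kbar p q r qinv r = q := by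
  obtain ⟨r', rfl⟩ : ∃ r', r = r' + 1 := ⟨r - 1, by omega⟩
  have hsum : kbar p q (r'+1) qinv (r'+1)
      = kbar p q (r'+1) qinv r' + ki p q (r'+1) qinv (r'+1) := by
    rw [kbar, kbar, Finset.sum_Icc_succ_top (by omega)]
  have hki : ki p q (r'+1) qinv (r'+1)
      = ((Rset p q qinv).filter (fun l => Qi p (r'+1) qinv r' ≤ l)).card := by
    rw [ki, if_pos rfl]
    norm_num
  rw [hsum, hki, kbar_count hp hq0 hqp hrp hqinv r' (by omega)]
  have := Finset.card_filter_add_card_filter_not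
    (s := Rset p q qinv) (p := fun l => l < Qi p (r'+1) qinv r')
  rw [Rset_card hp hqp hqinv] at this
  have hcongr : (Rset p q qinv).filter (fun l => ¬ l < Qi p (r'+1) qinv r')
      = (Rset p q qinv).filter (fun l => Qi p (r'+1) qinv r' ≤ l) := by
    apply Finset.filter_congr
    intro x _
    simp [not_lt]
  rw [hcongr] at this
  omega

lemma Qp'_pos (hp : 1 < p) (hr0 : 0 < r) (hrp : r < p)
    (hqinv : ((q : ℤ) * qinv) % (p : ℤ) = 1) : 0 < Qp' p r qinv := by
  have h0 := res_nonneg p (by omega) ((r:ℤ) * qinv)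
  rcases h0.lt_or_eq with h | h
  · exact h
  · exfalso
    have hmod : ((r:ℤ)) ≡ ((0:ℕ):ℤ) [ZMOD p] := by
      apply modeq_cancel p q qinv hp hqinv
      show ((r:ℤ) * qinv) % (p:ℤ) = (((0:ℕ):ℤ) * qinv) % (p:ℤ)
      push_cast
      rw [zero_mul, Int.zero_emod]
      exact (h.symm : res p ((r:ℤ) * qinv) = 0)
    have := hmod.dvd
    push_cast at this
    rw [zero_sub] at this
    rcases this with ⟨k, hk⟩
    have hk0 : k = 0 := by nlinarith [hk]
    rw [hk0, mul_zero] at hk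
    omega

lemma mIdx_card (hp : 1 < p) (hr0 : 0 < r) (hrp : r < p)
    (hqinv : ((q : ℤ) * qinv) % (p : ℤ) = 1) :
    ((Qset p r qinv).filter (fun x => x < Qp' p r qinv)).card = mIdx p r qinv + 1 := by
  have h0mem : (0:ℤ) ∈ (Qset p r qinv).filter (fun x => x < Qp' p r qinv) := by
    refine Finset.mem_filter.mpr ⟨?_, Qp'_pos hp hr0 hrp hqinv⟩
    refine Finset.mem_image.mpr ⟨0, Finset.mem_range.mpr hr0, by simp [res]⟩
  have hpos : 0 < ((Qset p r qinv).filter (fun x => x < Qp' p r qinv)).card :=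
    Finset.card_pos.mpr ⟨0, h0mem⟩
  rw [mIdx]
  omega

lemma mIdx_lt_r (hp : 1 < p) (hr0 : 0 < r) (hrp : r < p)
    (hqinv : ((q : ℤ) * qinv) % (p : ℤ) = 1) : mIdx p r qinv < r := by
  have h1 := mIdx_card hp hr0 hrp hqinv (q := q)
  have h2 : ((Qset p r qinv).filter (fun x => x < Qp' p r qinv)).card
      ≤ (Qset p r qinv).card := Finset.card_filter_le _ _
  rw [Qset_card hp hrp hqinv] at h2
  omega

lemma Qi_mIdx_lt (hp : 1 < p) (hr0 : 0 < r) (hrp : r < p)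
    (hqinv : ((q : ℤ) * qinv) % (p : ℤ) = 1) :
    Qi p r qinv (mIdx p r qinv) < Qp' p r qinv := by
  apply Qi_lt_of_lt_count hp hrp hqinv
  rw [mIdx_card hp hr0 hrp hqinv]
  omega

lemma kbar'_count (hp : 1 < p) (hq0 : 0 < q) (hqp : q < p) (hr0 : 0 < r) (hrp : r < p)
    (hqinv : ((q : ℤ) * qinv) % (p : ℤ) = 1) :
    kbar' p q r qinv = ((Rset p q qinv).filter (fun l => l < Qp' p r qinv)).card := by
  have hm := Qi_mIdx_lt hp hr0 hrp hqinv (q := q)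
  rw [kbar', k', kbar_count hp hq0 hqp hrp hqinv _ (mIdx_lt_r hp hr0 hrp hqinv)]
  have hsplit : (Rset p q qinv).filter (fun l => l < Qp' p r qinv)
      = (Rset p q qinv).filter (fun l => l < Qi p r qinv (mIdx p r qinv))
        ∪ (Rset p q qinv).filter
            (fun l => Qi p r qinv (mIdx p r qinv) ≤ l ∧ l < Qp' p r qinv) := by
    rw [← Finset.filter_or]
    apply Finset.filter_congr
    intro x _
    constructor
    · intro h
      by_cases hc : x < Qi p r qinv (mIdx p r qinv)
      · exact Or.inl hc
      · exact Or.inr ⟨by omega, h⟩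
    · intro h
      rcases h with h | h <;> omega
  have hdisj : Disjoint
      ((Rset p q qinv).filter (fun l => l < Qi p r qinv (mIdx p r qinv)))
      ((Rset p q qinv).filter
        (fun l => Qi p r qinv (mIdx p r qinv) ≤ l ∧ l < Qp' p r qinv)) := by
    rw [Finset.disjoint_filter]
    intro x _ h1 h2
    omega
  rw [hsplit, Finset.card_union_of_disjoint hdisj]

lemma fact2 (hp : 1 < p) (hq0 : 0 < q) (hqp : q < p) (hr0 : 0 < r) (hrp : r < p)
    (hqinv : ((q : ℤ) * qinv) % (p : ℤ) = 1) :
    (kbar' p q r qinv : ℤ) * p = Qp' p r qinv * q - r := by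
  have h1 : (q : ℤ) * qinv ≡ 1 [ZMOD p] := by
    unfold Int.ModEq
    rw [hqinv, Int.emod_eq_of_lt (by norm_num) (by exact_mod_cast hp)]
  have h0 : 0 ≤ Qp' p r qinv := res_nonneg p (by omega) _
  have hlt : Qp' p r qinv < p := res_lt p (by omega) _
  have hcast : (((Qp' p r qinv).toNat : ℕ) : ℤ) = Qp' p r qinv := Int.toNat_of_nonneg h0
  have hcount := count_lemma hp hq0 hqp hqinv (Qp' p r qinv).toNat (by omega)
  rw [hcast] at hcount
  have hres : res p (Qp' p r qinv * q) = r := by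
    refine res_eq_of p (by omega) ?_ (by omega) (by exact_mod_cast hrp)
    calc Qp' p r qinv * q ≡ ((r:ℤ) * qinv) * q [ZMOD p] := (res_modeq p _).mul_right _
      _ = (r:ℤ) * ((q:ℤ) * qinv) := by ring
      _ ≡ (r:ℤ) * 1 [ZMOD p] := h1.mul_left _
      _ = (r:ℤ) := by ring
  rw [hres] at hcount
  rw [kbar'_count hp hq0 hqp hr0 hrp hqinv]
  linarith [hcount]

end Qpart

lemma one_sub_X_pow_ne_zero (n : ℕ) (hn : 0 < n) :
    (1 : RatFunc ℚ) - RatFunc.X ^ ((n : ℕ) : ℤ) ≠ 0 := by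
  rw [zpow_natCast]
  intro h
  have hX : (RatFunc.X : RatFunc ℚ) ^ n = 1 := by
    have := sub_eq_zero.mp h
    exact this.symm
  have h2 : (algebraMap (Polynomial ℚ) (RatFunc ℚ)) (Polynomial.X ^ n)
      = (algebraMap (Polynomial ℚ) (RatFunc ℚ)) 1 := by
    rw [map_pow, map_one, RatFunc.algebraMap_X, hX]
  have h3 : (Polynomial.X : Polynomial ℚ) ^ n = 1 := RatFunc.algebraMap_injective ℚ h2
  have h4 := congrArg Polynomial.natDegree h3
  rw [Polynomial.natDegree_X_pow, Polynomial.natDegree_one] at h4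
  omega

lemma key {K : Type*} [Field K] (A a c d e S1 St T1 Tt X Xt Y Yt : K)
    (hA : A ≠ 0) (hB : 1 - e ≠ 0)
    (hX : X = 1 - (1 - a) * S1 - d) (hXt : Xt = 1 - (1 - a) * St - c)
    (hY : Y = 1 - (1 - a) * T1 - d) (hYt : Yt = 1 - (1 - a) * Tt - c * e) :
    (1 - a) / (1 - e) * (Xt / A * (a * (T1 + d)) - a * Tt * (X / A))
      - a * (Xt / A * ((1 - a) / (1 - e) * (S1 + d))
             - ((1 - a) / (1 - e) * St + c) * (X / A))
    = a / (A * (1 - e)) * (X * Yt - Y * Xt) := by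
  subst hX hXt hY hYt
  field_simp
  ring

end TTKAux


theorem stmt9 (p q r : ℕ) (qinv s : ℤ) (hcop : Nat.Coprime p q)
    (hq0 : 0 < q) (hqp : q < p) (hr1 : 1 < r) (hrp : r < p)
    (hqinv : ((q : ℤ) * qinv) % (p : ℤ) = 1) :
    minor3 p q r qinv s =
      RatFunc.X ^ ((r : ℤ) * s) /
          ((1 - RatFunc.X ^ (p : ℤ)) * (1 - RatFunc.X ^ (r : ℤ))) *
        (XX p q r qinv s * YYt p q r qinv s - YY p q r qinv s * XXt p q r qinv s) := by
  have hp2 : 1 < p := by omega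
  have hr0 : 0 < r := by omega
  have t0 : (RatFunc.X : RatFunc ℚ) ≠ 0 := RatFunc.X_ne_zero
  have hA : (1 : RatFunc ℚ) - RatFunc.X ^ ((p : ℕ) : ℤ) ≠ 0 :=
    TTKAux.one_sub_X_pow_ne_zero p (by omega)
  have hB : (1 : RatFunc ℚ) - RatFunc.X ^ ((r : ℕ) : ℤ) ≠ 0 :=
    TTKAux.one_sub_X_pow_ne_zero r (by omega)
  have hexp : Qp' p r qinv * (q : ℤ) + (mIdx p r qinv : ℤ) * ((r : ℤ) * s)
      = ((kbar' p q r qinv : ℤ) * (p : ℤ) + (mIdx p r qinv : ℤ) * ((r : ℤ) * s)) + (r : ℤ) := by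
    have := TTKAux.fact2 (q := q) (qinv := qinv) hp2 hq0 hqp hr0 hrp hqinv
    linarith
  have hYt : YYt p q r qinv s =
      1 - (1 - RatFunc.X ^ ((r : ℤ) * s)) *
            ∑ i ∈ Finset.Icc 1 (mIdx p r qinv),
              RatFunc.X ^ (Qi p r qinv i * (q : ℤ) + ((i : ℤ) - 1) * ((r : ℤ) * s))
        - RatFunc.X ^ ((kbar' p q r qinv : ℤ) * (p : ℤ) + (mIdx p r qinv : ℤ) * ((r : ℤ) * s))
            * RatFunc.X ^ ((r : ℕ) : ℤ) := by
    rw [YYt, hexp, zpow_add₀ t0]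
  have hS : (∑ i ∈ Finset.Icc 1 r,
        RatFunc.X ^ ((kbar p q r qinv i : ℤ) * (p : ℤ) + ((i : ℤ) - 1) * ((r : ℤ) * s)) : RatFunc ℚ)
      = (∑ i ∈ Finset.Icc 1 (r - 1),
          RatFunc.X ^ ((kbar p q r qinv i : ℤ) * (p : ℤ) + ((i : ℤ) - 1) * ((r : ℤ) * s)))
        + RatFunc.X ^ ((p : ℤ) * (q : ℤ) + ((r : ℤ) - 1) * ((r : ℤ) * s)) := by
    obtain ⟨r', hr'⟩ : ∃ r', r = r' + 1 := ⟨r - 1, by omega⟩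
    subst hr'
    rw [Finset.sum_Icc_succ_top (by omega)]
    congr 1
    rw [TTKAux.kbar_top hp2 hq0 hqp (by omega) hrp hqinv]
    congr 1
    push_cast
    ring
  have hT : (∑ i ∈ Finset.Icc 1 r,
        RatFunc.X ^ (QiE p r qinv i * (q : ℤ) + (i : ℤ) * ((r : ℤ) * s)) : RatFunc ℚ)
      = RatFunc.X ^ ((r : ℤ) * s) *
          ((∑ i ∈ Finset.Icc 1 (r - 1),
            RatFunc.X ^ (Qi p r qinv i * (q : ℤ) + ((i : ℤ) - 1) * ((r : ℤ) * s)))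
          + RatFunc.X ^ ((p : ℤ) * (q : ℤ) + ((r : ℤ) - 1) * ((r : ℤ) * s))) := by
    obtain ⟨r', hr'⟩ : ∃ r', r = r' + 1 := ⟨r - 1, by omega⟩
    subst hr'
    rw [Finset.sum_Icc_succ_top (by omega), mul_add, Finset.mul_sum]
    congr 1
    · apply Finset.sum_congr (by norm_num)
      intro i hi
      rw [Finset.mem_Icc] at hi
      rw [QiE, if_neg (by omega), ← zpow_add₀ t0]
      congr 1
      push_cast
      ring
    · rw [QiE, if_pos rfl, ← zpow_add₀ t0]
      congr 1
      push_cast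
      ring
  unfold minor3 a11 a12 a14 a22 a24 a31 a32 a34
  rw [hS, hT]
  exact TTKAux.key (1 - RatFunc.X ^ ((p : ℕ) : ℤ)) (RatFunc.X ^ ((r : ℤ) * s))
    (RatFunc.X ^ ((kbar' p q r qinv : ℤ) * (p : ℤ) + (mIdx p r qinv : ℤ) * ((r : ℤ) * s)))
    (RatFunc.X ^ ((p : ℤ) * (q : ℤ) + ((r : ℤ) - 1) * ((r : ℤ) * s)))
    (RatFunc.X ^ ((r : ℕ) : ℤ))
    (∑ i ∈ Finset.Icc 1 (r - 1),
      RatFunc.X ^ ((kbar p q r qinv i : ℤ) * (p : ℤ) + ((i : ℤ) - 1) * ((r : ℤ) * s)))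
    (∑ i ∈ Finset.Icc 1 (mIdx p r qinv),
      RatFunc.X ^ ((kbar p q r qinv i : ℤ) * (p : ℤ) + ((i : ℤ) - 1) * ((r : ℤ) * s)))
    (∑ i ∈ Finset.Icc 1 (r - 1),
      RatFunc.X ^ (Qi p r qinv i * (q : ℤ) + ((i : ℤ) - 1) * ((r : ℤ) * s)))
    (∑ i ∈ Finset.Icc 1 (mIdx p r qinv),
      RatFunc.X ^ (Qi p r qinv i * (q : ℤ) + ((i : ℤ) - 1) * ((r : ℤ) * s)))
    (XX p q r qinv s) (XXt p q r qinv s) (YY p q r qinv s) (YYt p q r qinv s)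
    hA hB rfl rfl rfl hYt
end
end
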